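/- arXiv:math/0701593 — 3 statements merged into one kernel-verified Lean document; each statement's English description precedes it below -/
import Mathlib

section
/- For every δ > 0, ω > 0 and t₀ ∈ ℝ, the function t ↦ cos(ω(t + t₀))·x_h'(t)² is integrable on ℝ and ∫_{−∞}^{∞} cos(ω(t + t₀))·x_h'(t)² dt = (6π/5)·ω·(δ² − ω⁴)·cos(ω t₀)/(δ²·sinh(πω/√δ)). -/
/-! Substituting `y = σ(√δ t)` with `σ` the logistic sigmoid, one has
`σ(1 - σ) = 1 / (2(1 + cosh))`, so `x_h'(t)² = 9δ (4q² - 16q³)` with `q = y(1 - y)`, while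
`e^{iωt} = (y / (1 - y))^{ia}` for `a = ω/√δ` and `dt = dy / (√δ q)`. The Fourier transform of
`x_h'²` is therefore a combination of the Beta integrals `B(2 + ia, 2 - ia)` and
`B(3 + ia, 3 - ia)`, i.e. a rational multiple of `Γ(1 + ia) Γ(1 - ia) = πa / sinh(πa)`
(reflection formula). The cosine integral is the real part of this transform times `e^{iωt₀}`. -/

open MeasureTheory Real

lemma one_sub_sigmoid (x : ℝ) : 1 - sigmoid x = sigmoid x * exp (-x) := by
  rw [sigmoid_mul_rexp_neg, sigmoid_neg]

lemma log_sigmoid_sub_log_one_sub_sigmoid (x : ℝ) :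
    log (sigmoid x) - log (1 - sigmoid x) = x := by
  rw [one_sub_sigmoid, log_mul (sigmoid_pos x).ne' (exp_pos _).ne', log_exp]
  ring

lemma sigmoid_mul_one_sub_sigmoid (x : ℝ) :
    sigmoid x * (1 - sigmoid x) = (2 * (1 + cosh x))⁻¹ := by
  rw [one_sub_sigmoid, sigmoid_def, cosh_eq]
  have hexp := exp_pos x
  rw [exp_neg]
  field_simp
  ring

lemma sinh_sq_div_one_add_cosh_pow_four (x : ℝ) :
    sinh x ^ 2 / (1 + cosh x) ^ 4 =
      4 * (sigmoid x * (1 - sigmoid x)) ^ 2 - 16 * (sigmoid x * (1 - sigmoid x)) ^ 3 := by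
  have hc : 1 + cosh x ≠ 0 := by positivity
  rw [sigmoid_mul_one_sub_sigmoid, sinh_sq]
  field_simp
  ring

lemma sigmoid_cpow_mul_one_sub_sigmoid_cpow_neg (x : ℝ) (c : ℂ) :
    (sigmoid x : ℂ) ^ c * (1 - (sigmoid x : ℂ)) ^ (-c) = Complex.exp (c * x) := by
  have h0 := sigmoid_pos x
  have h1 : 0 < 1 - sigmoid x := sub_pos.2 (sigmoid_lt_one x)
  have h1' : (1 - (sigmoid x : ℂ)) = ((1 - sigmoid x : ℝ) : ℂ) := by push_cast; ring
  rw [h1', Complex.cpow_def_of_ne_zero (by exact_mod_cast h0.ne'),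
    Complex.cpow_def_of_ne_zero (by exact_mod_cast h1.ne'), ← Complex.exp_add,
    ← Complex.ofReal_log h0.le, ← Complex.ofReal_log h1.le]
  have h : (log (sigmoid x) : ℂ) - (log (1 - sigmoid x) : ℂ) = x := by
    exact_mod_cast log_sigmoid_sub_log_one_sub_sigmoid x
  congr 1
  linear_combination c * h

lemma exp_mul_sigmoid_mul_one_sub_sigmoid_pow (x : ℝ) (c : ℂ) (n : ℕ) :
    Complex.exp (c * x) * ((sigmoid x : ℂ) * (1 - sigmoid x)) ^ n =
      (sigmoid x : ℂ) ^ (n + c) * (1 - (sigmoid x : ℂ)) ^ (n - c) := by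
  have h0 : (sigmoid x : ℂ) ≠ 0 := by exact_mod_cast (sigmoid_pos x).ne'
  have h1 : (1 - sigmoid x : ℂ) ≠ 0 := by exact_mod_cast (sub_pos.2 (sigmoid_lt_one x)).ne'
  rw [← sigmoid_cpow_mul_one_sub_sigmoid_cpow_neg x c, Complex.cpow_add _ _ h0,
    Complex.cpow_sub _ _ h1, Complex.cpow_natCast, Complex.cpow_natCast, Complex.cpow_neg,
    mul_pow, div_eq_mul_inv]
  ring

lemma integral_sigmoid_cpow_mul_one_sub_sigmoid_cpow {u v : ℂ} (hu : 0 < u.re) (hv : 0 < v.re) :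
    Integrable (fun x : ℝ => (sigmoid x : ℂ) ^ u * (1 - (sigmoid x : ℂ)) ^ v) ∧
      ∫ x : ℝ, (sigmoid x : ℂ) ^ u * (1 - (sigmoid x : ℂ)) ^ v = Complex.betaIntegral u v := by
  set F : ℝ → ℂ := fun y => (y : ℂ) ^ (u - 1) * (1 - (y : ℂ)) ^ (v - 1)
  have hderiv : ∀ x ∈ Set.univ, HasDerivWithinAt sigmoid (sigmoid x * (1 - sigmoid x)) Set.univ x :=
    fun x _ => (hasDerivAt_sigmoid x).hasDerivWithinAt
  have himage : sigmoid '' Set.univ = Set.Ioo 0 1 := by rw [Set.image_univ, range_sigmoid]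
  have hjac : ∀ x : ℝ, |sigmoid x * (1 - sigmoid x)| • F (sigmoid x) =
      (sigmoid x : ℂ) ^ u * (1 - (sigmoid x : ℂ)) ^ v := by
    intro x
    have h0 : (sigmoid x : ℂ) ≠ 0 := by exact_mod_cast (sigmoid_pos x).ne'
    have h1 : (1 - sigmoid x : ℂ) ≠ 0 := by exact_mod_cast (sub_pos.2 (sigmoid_lt_one x)).ne'
    rw [abs_of_pos (mul_pos (sigmoid_pos x) (sub_pos.2 (sigmoid_lt_one x))), Complex.real_smul]
    simp only [F]
    rw [Complex.cpow_sub _ _ h0, Complex.cpow_sub _ _ h1, Complex.cpow_one, Complex.cpow_one]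
    push_cast
    field_simp
  have hF : IntegrableOn F (Set.Ioo 0 1) :=
    ((intervalIntegrable_iff_integrableOn_Ioc_of_le zero_le_one).1
      (Complex.betaIntegral_convergent hu hv)).mono_set Set.Ioo_subset_Ioc_self
  refine ⟨?_, ?_⟩
  · rw [← himage, integrableOn_image_iff_integrableOn_abs_deriv_smul MeasurableSet.univ hderiv
      sigmoid_injective.injOn, integrableOn_univ] at hF
    simpa only [hjac] using hF
  · have h := integral_image_eq_integral_abs_deriv_smul MeasurableSet.univ hderiv
      sigmoid_injective.injOn F
    rw [himage, setIntegral_univ] at h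
    simp only [hjac] at h
    rw [← h, Complex.betaIntegral, intervalIntegral.integral_of_le zero_le_one,
      integral_Ioc_eq_integral_Ioo]

lemma integral_exp_mul_sigmoid_mul_one_sub_sigmoid_pow {c : ℂ} {n : ℕ} (hc : |c.re| < n) :
    Integrable (fun x : ℝ => Complex.exp (c * x) * ((sigmoid x : ℂ) * (1 - sigmoid x)) ^ n) ∧
      ∫ x : ℝ, Complex.exp (c * x) * ((sigmoid x : ℂ) * (1 - sigmoid x)) ^ n =
        Complex.betaIntegral (n + c) (n - c) := by
  have hu : 0 < ((n : ℂ) + c).re := by simp; linarith [neg_abs_le c.re]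
  have hv : 0 < ((n : ℂ) - c).re := by simp; linarith [le_abs_self c.re]
  simpa only [exp_mul_sigmoid_mul_one_sub_sigmoid_pow] using
    integral_sigmoid_cpow_mul_one_sub_sigmoid_cpow hu hv

lemma integral_exp_mul_sinh_sq_div_one_add_cosh_pow_four {c : ℂ} (hc : |c.re| < 2) :
    Integrable (fun x : ℝ => Complex.exp (c * x) * (sinh x ^ 2 / (1 + cosh x) ^ 4 : ℝ)) ∧
      ∫ x : ℝ, Complex.exp (c * x) * (sinh x ^ 2 / (1 + cosh x) ^ 4 : ℝ) =
        2 * (1 + c ^ 2) / 15 * (Complex.Gamma (2 + c) * Complex.Gamma (2 - c)) := by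
  obtain ⟨hint₂, hval₂⟩ := integral_exp_mul_sigmoid_mul_one_sub_sigmoid_pow (n := 2) hc
  obtain ⟨hint₃, hval₃⟩ :=
    integral_exp_mul_sigmoid_mul_one_sub_sigmoid_pow (n := 3) (by push_cast; linarith)
  have hsplit : (fun x : ℝ => Complex.exp (c * x) * (sinh x ^ 2 / (1 + cosh x) ^ 4 : ℝ)) =
      fun x : ℝ => 4 * (Complex.exp (c * x) * ((sigmoid x : ℂ) * (1 - sigmoid x)) ^ 2) -
        16 * (Complex.exp (c * x) * ((sigmoid x : ℂ) * (1 - sigmoid x)) ^ 3) := by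
    ext x
    rw [sinh_sq_div_one_add_cosh_pow_four]
    push_cast
    ring
  have hre : 0 < (2 + c).re ∧ 0 < (2 - c).re := by
    simp only [Complex.add_re, Complex.sub_re, Complex.re_ofNat]
    constructor <;> linarith [abs_lt.1 hc]
  have hre₃ : 0 < (3 + c).re ∧ 0 < (3 - c).re := by
    simp only [Complex.add_re, Complex.sub_re, Complex.re_ofNat]
    constructor <;> linarith [abs_lt.1 hc]
  have hΓ₃ : Complex.Gamma (3 + c) * Complex.Gamma (3 - c) =
      (2 + c) * (2 - c) * (Complex.Gamma (2 + c) * Complex.Gamma (2 - c)) := by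
    rw [show 3 + c = (2 + c) + 1 by ring, show 3 - c = (2 - c) + 1 by ring,
      Complex.Gamma_add_one _ (Complex.ne_zero_of_re_pos hre.1),
      Complex.Gamma_add_one _ (Complex.ne_zero_of_re_pos hre.2)]
    ring
  rw [hsplit]
  refine ⟨(hint₂.const_mul 4).sub (hint₃.const_mul 16), ?_⟩
  rw [integral_sub (hint₂.const_mul 4) (hint₃.const_mul 16), integral_const_mul,
    integral_const_mul, hval₂, hval₃]
  push_cast
  rw [Complex.betaIntegral_eq_Gamma_mul_div _ _ hre.1 hre.2,
    Complex.betaIntegral_eq_Gamma_mul_div _ _ hre₃.1 hre₃.2, hΓ₃,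
    show 2 + c + (2 - c) = (3 : ℕ) + 1 by push_cast; ring,
    show 3 + c + (3 - c) = (5 : ℕ) + 1 by push_cast; ring,
    Complex.Gamma_nat_eq_factorial, Complex.Gamma_nat_eq_factorial]
  norm_num [Nat.factorial]
  ring

lemma Gamma_two_add_mul_I_mul_Gamma_two_sub_mul_I {a : ℝ} (ha : a ≠ 0) :
    Complex.Gamma (2 + a * Complex.I) * Complex.Gamma (2 - a * Complex.I) =
      ((1 + a ^ 2) * π * a / sinh (π * a) : ℝ) := by
  set z : ℂ := a * Complex.I
  have hz : z ≠ 0 := mul_ne_zero (by exact_mod_cast ha) Complex.I_ne_zero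
  have hsin : Complex.sin (π * z) = sinh (π * a) * Complex.I := by
    rw [show (π : ℂ) * z = ((π * a : ℝ) : ℂ) * Complex.I by push_cast; ring, Complex.sin_mul_I,
      Complex.ofReal_sinh]
  have hsinh : (sinh (π * a) : ℂ) ≠ 0 := by
    exact_mod_cast sinh_ne_zero.2 (mul_ne_zero pi_ne_zero ha)
  rw [show 2 + z = (1 + z) + 1 by ring, show 2 - z = (1 - z) + 1 by ring,
    Complex.Gamma_add_one _ (Complex.ne_zero_of_re_pos (by simp [z])),
    Complex.Gamma_add_one _ (Complex.ne_zero_of_re_pos (by simp [z])),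
    add_comm 1 z, Complex.Gamma_add_one _ hz]
  calc (z + 1) * (z * Complex.Gamma z) * ((1 - z) * Complex.Gamma (1 - z))
      = (1 - z ^ 2) * z * (Complex.Gamma z * Complex.Gamma (1 - z)) := by ring
    _ = _ := by
      rw [Complex.Gamma_mul_Gamma_one_sub, hsin]
      simp only [z]
      push_cast
      field_simp
      rw [Complex.I_sq]
      ring

lemma hasDerivAt_one_sub_three_div_one_add_cosh (s t : ℝ) :
    HasDerivAt (fun t => 1 - 3 / (1 + cosh (s * t)))
      (3 * s * sinh (s * t) / (1 + cosh (s * t)) ^ 2) t := by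
  have hc : 1 + cosh (s * t) ≠ 0 := by positivity
  have h := (((((hasDerivAt_id' t).const_mul s).cosh.const_add 1).inv hc).const_mul 3).const_sub 1
  exact h.congr_deriv (by ring)

lemma integral_exp_mul_I_mul_deriv_sq {s ω : ℝ} (hs : 0 < s) (hω : ω ≠ 0) (x : ℝ → ℝ)
    (hx : ∀ t, x t = 1 - 3 / (1 + cosh (s * t))) :
    Integrable (fun t : ℝ => Complex.exp (ω * t * Complex.I) * (deriv x t ^ 2 : ℝ)) ∧
      ∫ t : ℝ, Complex.exp (ω * t * Complex.I) * (deriv x t ^ 2 : ℝ) =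
        ((6 * π / 5) * ω * (s ^ 4 - ω ^ 4) / (s ^ 4 * sinh (π * ω / s)) : ℝ) := by
  set a := ω / s
  set g : ℝ → ℂ := fun y => Complex.exp (a * Complex.I * y) * (sinh y ^ 2 / (1 + cosh y) ^ 4 : ℝ)
  have hg := integral_exp_mul_sinh_sq_div_one_add_cosh_pow_four (c := a * Complex.I) (by simp)
  have hscale : ∀ t : ℝ, Complex.exp (ω * t * Complex.I) * (deriv x t ^ 2 : ℝ) =
      (9 * s ^ 2 : ℝ) * g (s * t) := by
    intro t
    have hexp : (a : ℂ) * Complex.I * (s * t : ℝ) = ω * t * Complex.I := by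
      have : (s : ℂ) ≠ 0 := by exact_mod_cast hs.ne'
      simp only [a]
      push_cast
      field_simp
    have hsq : deriv x t ^ 2 = 9 * s ^ 2 * (sinh (s * t) ^ 2 / (1 + cosh (s * t)) ^ 4) := by
      rw [show x = _ from funext hx, (hasDerivAt_one_sub_three_div_one_add_cosh s t).deriv,
        div_pow, ← pow_mul]
      ring
    simp only [g, hsq, hexp]
    push_cast
    ring
  simp_rw [hscale]
  refine ⟨(hg.1.comp_mul_left' hs.ne').const_mul _, ?_⟩
  rw [integral_const_mul, Measure.integral_comp_mul_left g s, hg.2,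
    Gamma_two_add_mul_I_mul_Gamma_two_sub_mul_I (div_ne_zero hω hs.ne')]
  have hI : 1 + ((a : ℂ) * Complex.I) ^ 2 = ((1 - a ^ 2 : ℝ) : ℂ) := by
    rw [mul_pow, Complex.I_sq]
    push_cast
    ring
  rw [hI, Complex.real_smul]
  norm_cast
  have hsinh : sinh (π * ω / s) ≠ 0 := sinh_ne_zero.2 (by positivity)
  rw [abs_of_pos (inv_pos.2 hs)]
  simp only [a]
  rw [← mul_div_assoc]
  field_simp
  ring

lemma integral_cos_mul_add_mul_eq_cos_mul {f : ℝ → ℝ} {ω K : ℝ}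
    (hf : Integrable fun t : ℝ => Complex.exp (ω * t * Complex.I) * f t)
    (hK : ∫ t : ℝ, Complex.exp (ω * t * Complex.I) * f t = K) (t₀ : ℝ) :
    Integrable (fun t => cos (ω * (t + t₀)) * f t) ∧
      ∫ t, cos (ω * (t + t₀)) * f t = cos (ω * t₀) * K := by
  have hre : ∀ t : ℝ, cos (ω * (t + t₀)) * f t =
      (Complex.exp (ω * t₀ * Complex.I) * (Complex.exp (ω * t * Complex.I) * f t)).re := by
    intro t
    rw [← mul_assoc, ← Complex.exp_add, ← add_mul, ← mul_add, add_comm (t₀ : ℂ),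
      ← Complex.ofReal_add, ← Complex.ofReal_mul, Complex.re_mul_ofReal,
      Complex.exp_ofReal_mul_I_re]
  have hg := hf.const_mul (Complex.exp (ω * t₀ * Complex.I))
  refine ⟨hg.re.congr (.of_forall fun t => (hre t).symm), ?_⟩
  have h := integral_re hg
  simp only [RCLike.re_to_complex] at h
  simp_rw [hre]
  rw [h, integral_const_mul, hK, ← Complex.ofReal_mul, Complex.re_mul_ofReal,
    Complex.exp_ofReal_mul_I_re]

/-- For every δ > 0, ω > 0 and t₀ ∈ ℝ, `t ↦ cos(ω(t+t₀))·x_h'(t)²`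
is integrable on ℝ and
`∫ cos(ω(t+t₀))·x_h'(t)² dt = (6π/5)·ω·(δ² − ω⁴)·cos(ω t₀)/(δ²·sinh(πω/√δ))`. -/
theorem helmholtz_mass_derivative_integral (δ ω : ℝ) (hδ : 0 < δ) (hω : 0 < ω) (t₀ : ℝ)
    (x : ℝ → ℝ)
    (hx : ∀ t : ℝ, x t = 1 - 3 / (1 + Real.cosh (Real.sqrt δ * t))) :
    Integrable (fun t : ℝ => Real.cos (ω * (t + t₀)) * (deriv x t) ^ 2) ∧
    ∫ t : ℝ, Real.cos (ω * (t + t₀)) * (deriv x t) ^ 2 =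
      (6 * Real.pi / 5) * ω * (δ ^ 2 - ω ^ 4) * Real.cos (ω * t₀) /
        (δ ^ 2 * Real.sinh (Real.pi * ω / Real.sqrt δ)) := by
  have hs4 : √δ ^ 4 = δ ^ 2 := by rw [show 4 = 2 * 2 by rfl, pow_mul, sq_sqrt hδ.le]
  obtain ⟨hint, hval⟩ := integral_exp_mul_I_mul_deriv_sq (sqrt_pos.2 hδ) hω.ne' x hx
  rw [hs4] at hval
  obtain ⟨hint', hval'⟩ := integral_cos_mul_add_mul_eq_cos_mul hint hval t₀
  exact ⟨hint', hval'.trans (by ring)⟩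
end

section
/- For every a ∈ ℝ with a ≠ 0, the function v ↦ sin(a·v)·tanh(v)·sech(v)² is integrable on ℝ and ∫_{−∞}^{∞} sin(a·v)·tanh(v)·sech(v)² dv = π·a²/(2·sinh(π·a/2)). -/
/-!
Substituting `x = (1 + tanh v) / 2` maps `ℝ` onto `(0, 1)` with `dx = sech² v / 2 dv`,
`2x - 1 = tanh v` and `x / (1 - x) = e^{2v}`. Hence
`∫ tanh v · sech² v · e^{2zv} dv = 4 B(2 + z, 1 - z) - 2 B(1 + z, 1 - z) = 2z Γ(1 + z) Γ(1 - z)`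
for `|re z| < 1`. At `z = i a / 2` the reflection formula gives
`Γ(1 + ib) Γ(1 - ib) = π b / sinh (π b)`, and the integral of the theorem is the imaginary part.
-/

open MeasureTheory Set

theorem Real.hasDerivAt_tanh (v : ℝ) : HasDerivAt Real.tanh ((1 / Real.cosh v) ^ 2) v := by
  have h := (Real.hasDerivAt_sinh v).div (Real.hasDerivAt_cosh v) (Real.cosh_pos v).ne'
  rw [show Real.sinh / Real.cosh = Real.tanh from
    funext fun x => (Real.tanh_eq_sinh_div_cosh x).symm] at h
  rwa [← sq, ← sq, Real.cosh_sq_sub_sinh_sq, ← one_div_pow] at h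

theorem Real.log_one_add_tanh_div_one_sub_tanh (v : ℝ) :
    Real.log ((1 + Real.tanh v) / (1 - Real.tanh v)) = 2 * v := by
  have h := Real.artanh_eq_half_log (Ioo_subset_Icc_self (Real.tanh_bijOn.mapsTo (mem_univ v)))
  rw [Real.artanh_tanh] at h
  linarith

section TanhSubstitution

theorem image_one_add_tanh_div_two :
    (fun v => (1 + Real.tanh v) / 2) '' univ = Ioo 0 1 := by
  rw [show (fun v => (1 + Real.tanh v) / 2) = (fun t => (1 + t) / 2) ∘ Real.tanh from rfl,
    image_comp, Real.tanh_bijOn.image_eq]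
  ext x
  constructor
  · rintro ⟨t, ⟨ht₁, ht₂⟩, rfl⟩
    constructor <;> linarith
  · rintro ⟨hx₀, hx₁⟩
    exact ⟨2 * x - 1, ⟨by linarith, by linarith⟩, by ring⟩

theorem hasDerivWithinAt_one_add_tanh_div_two (v : ℝ) :
    HasDerivWithinAt (fun v => (1 + Real.tanh v) / 2) ((1 / Real.cosh v) ^ 2 / 2) univ v :=
  (((Real.hasDerivAt_tanh v).const_add 1).div_const 2).hasDerivWithinAt

theorem injOn_one_add_tanh_div_two : InjOn (fun v => (1 + Real.tanh v) / 2) univ :=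
  fun _ _ _ _ h => Real.tanh_injective (by simpa using h)

variable {E : Type*} [NormedAddCommGroup E] [NormedSpace ℝ E]

theorem integrableOn_Ioo_zero_one_iff_integrable_tanh_subst (g : ℝ → E) :
    IntegrableOn g (Ioo 0 1) ↔
      Integrable (fun v => ((1 / Real.cosh v) ^ 2 / 2) • g ((1 + Real.tanh v) / 2)) := by
  rw [← image_one_add_tanh_div_two, integrableOn_image_iff_integrableOn_abs_deriv_smul
    MeasurableSet.univ (fun v _ => hasDerivWithinAt_one_add_tanh_div_two v)
    injOn_one_add_tanh_div_two, integrableOn_univ]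
  simp_rw [abs_div, abs_sq, abs_two]

theorem setIntegral_Ioo_zero_one_eq_integral_tanh_subst (g : ℝ → E) :
    ∫ x in Ioo 0 1, g x = ∫ v, ((1 / Real.cosh v) ^ 2 / 2) • g ((1 + Real.tanh v) / 2) := by
  rw [← image_one_add_tanh_div_two, integral_image_eq_integral_abs_deriv_smul
    MeasurableSet.univ (fun v _ => hasDerivWithinAt_one_add_tanh_div_two v)
    injOn_one_add_tanh_div_two, setIntegral_univ]
  simp_rw [abs_div, abs_sq, abs_two]

end TanhSubstitution

noncomputable def betaIntegrand (u v : ℂ) (x : ℝ) : ℂ :=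
  (x : ℂ) ^ (u - 1) * (1 - (x : ℂ)) ^ (v - 1)

theorem integrableOn_betaIntegrand {u v : ℂ} (hu : 0 < u.re) (hv : 0 < v.re) :
    IntegrableOn (betaIntegrand u v) (Ioo 0 1) :=
  ((intervalIntegrable_iff_integrableOn_Ioc_of_le zero_le_one).mp
    (Complex.betaIntegral_convergent hu hv)).mono_set Ioo_subset_Ioc_self

theorem betaIntegral_eq_setIntegral_Ioo (u v : ℂ) :
    Complex.betaIntegral u v = ∫ x in Ioo 0 1, betaIntegrand u v x := by
  rw [Complex.betaIntegral, intervalIntegral.integral_of_le zero_le_one,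
    integral_Ioc_eq_integral_Ioo]
  rfl

theorem betaIntegrand_add_one_left (u v : ℂ) {x : ℝ} (hx : x ≠ 0) :
    betaIntegrand (u + 1) v x = x * betaIntegrand u v x := by
  have hx' : (x : ℂ) ≠ 0 := by exact_mod_cast hx
  rw [betaIntegrand, betaIntegrand, add_sub_cancel_right, Complex.cpow_sub u 1 hx',
    Complex.cpow_one]
  field_simp

theorem cpow_mul_one_sub_cpow_neg {x : ℝ} (hx : x ∈ Ioo 0 1) (z : ℂ) :
    (x : ℂ) ^ z * (1 - (x : ℂ)) ^ (-z) = Complex.exp (Real.log (x / (1 - x)) * z) := by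
  obtain ⟨hx₀, hx₁⟩ := hx
  have h₁ : (0 : ℝ) < 1 - x := by linarith
  rw [show (1 : ℂ) - x = ((1 - x : ℝ) : ℂ) by push_cast; ring,
    Complex.cpow_def_of_ne_zero (by exact_mod_cast hx₀.ne'),
    Complex.cpow_def_of_ne_zero (by exact_mod_cast h₁.ne'), ← Complex.exp_add,
    ← Complex.ofReal_log hx₀.le, ← Complex.ofReal_log h₁.le, Real.log_div hx₀.ne' h₁.ne']
  push_cast
  ring_nf

theorem betaIntegrand_one_add_one_sub_tanh_subst (z : ℂ) (v : ℝ) :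
    betaIntegrand (1 + z) (1 - z) ((1 + Real.tanh v) / 2) = Complex.exp (2 * z * v) := by
  have ht := Real.tanh_bijOn.mapsTo (mem_univ v)
  have hx : (1 + Real.tanh v) / 2 ∈ Ioo 0 1 := ⟨by linarith [ht.1], by linarith [ht.2]⟩
  rw [betaIntegrand, add_sub_cancel_left, sub_sub_cancel_left, cpow_mul_one_sub_cpow_neg hx,
    show (1 + Real.tanh v) / 2 / (1 - (1 + Real.tanh v) / 2) = (1 + Real.tanh v) / (1 - Real.tanh v)
      by field_simp; ring, Real.log_one_add_tanh_div_one_sub_tanh]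
  push_cast
  ring_nf

theorem tanh_subst_four_mul_betaIntegrand_sub (z : ℂ) (v : ℝ) :
    ((1 / Real.cosh v) ^ 2 / 2) • (4 * betaIntegrand (2 + z) (1 - z) ((1 + Real.tanh v) / 2)
      - 2 * betaIntegrand (1 + z) (1 - z) ((1 + Real.tanh v) / 2)) =
      ((Real.tanh v * (1 / Real.cosh v) ^ 2 : ℝ) : ℂ) * Complex.exp (2 * z * v) := by
  have hx : (1 + Real.tanh v) / 2 ≠ 0 := by
    linarith [(Real.tanh_bijOn.mapsTo (mem_univ v)).1]
  rw [show 2 + z = 1 + z + 1 by ring, betaIntegrand_add_one_left _ _ hx,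
    betaIntegrand_one_add_one_sub_tanh_subst, Complex.real_smul]
  push_cast
  ring

theorem four_mul_betaIntegral_two_add_sub {z : ℂ} (hz₁ : -1 < z.re) (hz₂ : z.re < 1) :
    4 * Complex.betaIntegral (2 + z) (1 - z) - 2 * Complex.betaIntegral (1 + z) (1 - z) =
      2 * z * (Complex.Gamma (1 + z) * Complex.Gamma (1 - z)) := by
  have h₁ := Complex.Gamma_mul_Gamma_eq_betaIntegral (s := 1 + z) (t := 1 - z)
    (by simp; linarith) (by simp; linarith)
  have h₂ := Complex.Gamma_mul_Gamma_eq_betaIntegral (s := 2 + z) (t := 1 - z)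
    (by simp; linarith) (by simp; linarith)
  have hΓ : Complex.Gamma (2 + z) = (1 + z) * Complex.Gamma (1 + z) := by
    rw [show 2 + z = 1 + z + 1 by ring]
    refine Complex.Gamma_add_one _ fun h => ?_
    have := congrArg Complex.re h
    simp at this
    linarith
  have hΓ₂ : Complex.Gamma 2 = 1 := by simp
  have hΓ₃ : Complex.Gamma 3 = 2 := by simp [Nat.factorial]
  rw [show 1 + z + (1 - z) = 2 by ring, hΓ₂] at h₁
  rw [show 2 + z + (1 - z) = 3 by ring, hΓ, hΓ₃] at h₂
  linear_combination 2 * h₁ - 2 * h₂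

theorem Complex.Gamma_one_add_mul_I_mul_Gamma_one_sub_mul_I {b : ℝ} (hb : b ≠ 0) :
    Complex.Gamma (1 + b * Complex.I) * Complex.Gamma (1 - b * Complex.I) =
      ((Real.pi * b / Real.sinh (Real.pi * b) : ℝ) : ℂ) := by
  have hz : (b : ℂ) * Complex.I ≠ 0 := mul_ne_zero (by exact_mod_cast hb) Complex.I_ne_zero
  have hs : Real.sinh (Real.pi * b) ≠ 0 := by
    rw [Ne, Real.sinh_eq_zero]
    exact mul_ne_zero Real.pi_ne_zero hb
  rw [add_comm, Complex.Gamma_add_one _ hz, mul_assoc, Complex.Gamma_mul_Gamma_one_sub,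
    ← mul_assoc, Complex.sin_mul_I, ← Complex.ofReal_mul, ← Complex.ofReal_sinh]
  push_cast
  field_simp

theorem integrable_tanh_mul_sech_sq_mul_cexp_and_integral_eq {z : ℂ} (hz₁ : -1 < z.re)
    (hz₂ : z.re < 1) :
    Integrable (fun v : ℝ => ((Real.tanh v * (1 / Real.cosh v) ^ 2 : ℝ) : ℂ) *
        Complex.exp (2 * z * v)) ∧
      ∫ v : ℝ, ((Real.tanh v * (1 / Real.cosh v) ^ 2 : ℝ) : ℂ) * Complex.exp (2 * z * v) =
        2 * z * (Complex.Gamma (1 + z) * Complex.Gamma (1 - z)) := by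
  have h₁ : IntegrableOn (betaIntegrand (1 + z) (1 - z)) (Ioo 0 1) :=
    integrableOn_betaIntegrand (by simp; linarith) (by simp; linarith)
  have h₂ : IntegrableOn (betaIntegrand (2 + z) (1 - z)) (Ioo 0 1) :=
    integrableOn_betaIntegrand (by simp; linarith) (by simp; linarith)
  have hsubst := funext (tanh_subst_four_mul_betaIntegrand_sub z)
  constructor
  · rw [← hsubst]
    exact (integrableOn_Ioo_zero_one_iff_integrable_tanh_subst _).mp
      ((h₂.const_mul 4).sub (h₁.const_mul 2))
  · rw [← four_mul_betaIntegral_two_add_sub hz₁ hz₂, betaIntegral_eq_setIntegral_Ioo,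
      betaIntegral_eq_setIntegral_Ioo, ← integral_const_mul, ← integral_const_mul,
      ← integral_sub (h₂.const_mul 4) (h₁.const_mul 2),
      setIntegral_Ioo_zero_one_eq_integral_tanh_subst, ← hsubst]

/-- For every a ≠ 0, the function `v ↦ sin(a·v)·tanh(v)·sech(v)²`
is integrable on ℝ and `∫ sin(a·v)·tanh(v)·sech(v)² dv = π·a²/(2·sinh(π·a/2))`. -/
theorem fourier_integral_sin_tanh_sech_sq (a : ℝ) (ha : a ≠ 0) :
    Integrable (fun v : ℝ => Real.sin (a * v) * Real.tanh v * (1 / Real.cosh v) ^ 2) ∧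
    ∫ v : ℝ, Real.sin (a * v) * Real.tanh v * (1 / Real.cosh v) ^ 2 =
      Real.pi * a ^ 2 / (2 * Real.sinh (Real.pi * a / 2)) := by
  obtain ⟨hint, hval⟩ := integrable_tanh_mul_sech_sq_mul_cexp_and_integral_eq
    (z := ((a / 2 : ℝ) : ℂ) * Complex.I) (by simp) (by simp)
  have hintegrand : (fun v : ℝ => Real.sin (a * v) * Real.tanh v * (1 / Real.cosh v) ^ 2) =
      fun v : ℝ => (((Real.tanh v * (1 / Real.cosh v) ^ 2 : ℝ) : ℂ) *
        Complex.exp (2 * (((a / 2 : ℝ) : ℂ) * Complex.I) * v)).im := by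
    funext v
    rw [Complex.im_ofReal_mul, show 2 * (((a / 2 : ℝ) : ℂ) * Complex.I) * v =
      ((a * v : ℝ) : ℂ) * Complex.I by push_cast; ring, Complex.exp_ofReal_mul_I_im]
    ring
  rw [hintegrand]
  refine ⟨hint.im, ?_⟩
  rw [← RCLike.im_eq_complex_im, integral_im hint, hval,
    Complex.Gamma_one_add_mul_I_mul_Gamma_one_sub_mul_I (by positivity), RCLike.im_eq_complex_im,
    mul_comm, ← mul_assoc, ← mul_assoc, ← Complex.ofReal_ofNat, ← Complex.ofReal_mul,
    ← Complex.ofReal_mul, Complex.mul_I_im, Complex.ofReal_re]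
  field_simp
end

section
/- For every a ∈ ℝ, the function v ↦ cos(a·v)·tanh(v)²·sech(v)⁴ is integrable on ℝ and ∫_{−∞}^{∞} cos(a·v)·tanh(v)²·sech(v)⁴ dv = π·a·(a² + 4)·(4 − a²)/(120·sinh(π·a/2)), where for a = 0 the right-hand side is interpreted as its limit 4/15. -/
/-!
Substituting `x = σ(v)` with the logistic function `σ(v) = (1 + e⁻ᵛ)⁻¹`, which maps `ℝ` onto
`(0, 1)` with `dx = σ(v) σ(-v) dv`, turns Euler's Beta integral into
`B(u, w) = ∫ σ(v)ᵘ σ(-v)ʷ dv`. For `u = n + iβ`, `w = n - iβ` and `v = 2t` the integrand is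
`4⁻ⁿ e^{2iβt} sech²ⁿ t`, because `σ(2t) σ(-2t) = sech² t / 4` and `σ(2t) / σ(-2t) = e^{2t}`. Hence
the Fourier transform of `sech²ⁿ` is a product of Gamma values. Writing
`tanh² sech⁴ = sech⁴ - sech⁶` and using the recursion and reflection formulas of `Γ`, everything
reduces to `Γ(1 + iβ) Γ(1 - iβ) = πβ / sinh(πβ)`.
-/

open MeasureTheory Set Real

namespace Real

lemma sigmoid_two_mul_mul_sigmoid_neg_two_mul (t : ℝ) :
    sigmoid (2 * t) * sigmoid (-(2 * t)) = (1 / cosh t) ^ 2 / 4 := by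
  have h : exp (2 * t) = exp t ^ 2 := by rw [← exp_nat_mul]; ring_nf
  rw [sigmoid_def, sigmoid_def, neg_neg, exp_neg, h, cosh_eq, exp_neg]
  field_simp
  ring

lemma log_sigmoid_sub_log_sigmoid_neg (x : ℝ) :
    log (sigmoid x) - log (sigmoid (-x)) = x := by
  rw [← sigmoid_mul_rexp_neg, log_mul (sigmoid_pos x).ne' (exp_pos _).ne', log_exp]
  ring

lemma tanh_sq_mul_one_div_cosh_pow_four (t : ℝ) :
    tanh t ^ 2 * (1 / cosh t) ^ 4 = (1 / cosh t) ^ (2 * 2) - (1 / cosh t) ^ (2 * 3) := by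
  have hc := (cosh_pos t).ne'
  simp only [tanh_eq_sinh_div_cosh, one_div, inv_pow, div_pow]
  field_simp
  linear_combination -cosh t ^ 10 * cosh_sq t

end Real

namespace Complex

lemma ofReal_cpow_natCast_add_mul_I {x : ℝ} (hx : 0 < x) (n : ℕ) (β : ℝ) :
    (x : ℂ) ^ ((n : ℂ) + β * I) = ((x ^ n : ℝ) : ℂ) * cexp ((β * Real.log x : ℝ) * I) := by
  have hxc : (x : ℂ) ≠ 0 := ofReal_ne_zero.2 hx.ne'
  rw [cpow_add _ _ hxc, cpow_natCast, cpow_def_of_ne_zero hxc, ← ofReal_log hx.le]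
  push_cast
  ring_nf

section BetaIntegral

variable {u w : ℂ}

lemma abs_deriv_sigmoid_smul_betaIntegrand (v : ℝ) :
    |sigmoid v * (1 - sigmoid v)| •
        ((sigmoid v : ℂ) ^ (u - 1) * (1 - (sigmoid v : ℂ)) ^ (w - 1)) =
      (sigmoid v : ℂ) ^ u * (sigmoid (-v) : ℂ) ^ w := by
  have hσ := sigmoid_pos v
  have hσ' := sigmoid_pos (-v)
  have hσc : (sigmoid v : ℂ) ≠ 0 := ofReal_ne_zero.2 hσ.ne'
  have hσc' : (sigmoid (-v) : ℂ) ≠ 0 := ofReal_ne_zero.2 hσ'.ne'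
  rw [← sigmoid_neg, abs_of_pos (mul_pos hσ hσ'), real_smul,
    show (1 : ℂ) - sigmoid v = sigmoid (-v) by push_cast [sigmoid_neg]; rfl,
    cpow_sub _ _ hσc, cpow_sub _ _ hσc', cpow_one, cpow_one]
  push_cast
  field_simp

lemma integrableOn_betaIntegrand (hu : 0 < u.re) (hw : 0 < w.re) :
    IntegrableOn (fun x : ℝ => (x : ℂ) ^ (u - 1) * (1 - (x : ℂ)) ^ (w - 1)) (Ioo 0 1) :=
  ((intervalIntegrable_iff_integrableOn_Ioc_of_le zero_le_one).1
    (betaIntegral_convergent hu hw)).mono_set Ioo_subset_Ioc_self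

theorem integrable_sigmoid_cpow_mul_sigmoid_neg_cpow (hu : 0 < u.re) (hw : 0 < w.re) :
    Integrable fun v : ℝ => (sigmoid v : ℂ) ^ u * (sigmoid (-v) : ℂ) ^ w := by
  have h := (integrableOn_image_iff_integrableOn_abs_deriv_smul MeasurableSet.univ
    (fun v _ => (hasDerivAt_sigmoid v).hasDerivWithinAt) sigmoid_injective.injOn
    (fun x : ℝ => (x : ℂ) ^ (u - 1) * (1 - (x : ℂ)) ^ (w - 1))).1
    (by rw [image_univ, range_sigmoid]; exact integrableOn_betaIntegrand hu hw)
  simpa only [integrableOn_univ, abs_deriv_sigmoid_smul_betaIntegrand] using h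

theorem integral_sigmoid_cpow_mul_sigmoid_neg_cpow (u w : ℂ) :
    ∫ v : ℝ, (sigmoid v : ℂ) ^ u * (sigmoid (-v) : ℂ) ^ w = betaIntegral u w := by
  have h := integral_image_eq_integral_abs_deriv_smul MeasurableSet.univ
    (fun v _ => (hasDerivAt_sigmoid v).hasDerivWithinAt) sigmoid_injective.injOn
    (fun x : ℝ => (x : ℂ) ^ (u - 1) * (1 - (x : ℂ)) ^ (w - 1))
  rw [image_univ, range_sigmoid, setIntegral_univ] at h
  simp only [abs_deriv_sigmoid_smul_betaIntegrand] at h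
  rw [← h, betaIntegral, intervalIntegral.integral_of_le zero_le_one,
    integral_Ioc_eq_integral_Ioo]

end BetaIntegral

lemma sigmoid_two_mul_cpow_mul_sigmoid_neg_two_mul_cpow (n : ℕ) (β t : ℝ) :
    (sigmoid (2 * t) : ℂ) ^ ((n : ℂ) + β * I) * (sigmoid (-(2 * t)) : ℂ) ^ ((n : ℂ) - β * I) =
      cexp ((2 * β * t : ℝ) * I) * (((1 / Real.cosh t) ^ (2 * n) : ℝ) : ℂ) / 4 ^ n := by
  rw [sub_eq_add_neg, ← neg_mul (β : ℂ), ← ofReal_neg,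
    ofReal_cpow_natCast_add_mul_I (sigmoid_pos _), ofReal_cpow_natCast_add_mul_I (sigmoid_pos _)]
  have hlog := log_sigmoid_sub_log_sigmoid_neg (2 * t)
  calc _ = (((sigmoid (2 * t) * sigmoid (-(2 * t))) ^ n : ℝ) : ℂ) *
        cexp ((β * Real.log (sigmoid (2 * t)) : ℝ) * I +
          (-β * Real.log (sigmoid (-(2 * t))) : ℝ) * I) := by
          rw [Complex.exp_add, mul_pow]; push_cast; ring
    _ = _ := by
      rw [← add_mul, ← ofReal_add, sigmoid_two_mul_mul_sigmoid_neg_two_mul, div_pow, ← pow_mul,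
        show β * Real.log (sigmoid (2 * t)) + -β * Real.log (sigmoid (-(2 * t))) = 2 * β * t by
          linear_combination β * hlog]
      push_cast
      ring

theorem integrable_cexp_mul_I_mul_sech_pow (a : ℝ) {n : ℕ} (hn : n ≠ 0) :
    Integrable fun t : ℝ => cexp ((a * t : ℝ) * I) * (((1 / Real.cosh t) ^ (2 * n) : ℝ) : ℂ) := by
  have hn' : (0 : ℝ) < n := Nat.cast_pos.2 (Nat.pos_of_ne_zero hn)
  have h := ((integrable_sigmoid_cpow_mul_sigmoid_neg_cpow (u := n + (a / 2 : ℝ) * I)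
    (w := n - (a / 2 : ℝ) * I) (by simpa using hn') (by simpa using hn')).comp_mul_left'
      two_ne_zero).const_mul (4 ^ n)
  refine h.congr (Filter.Eventually.of_forall fun t => ?_)
  simp only [sigmoid_two_mul_cpow_mul_sigmoid_neg_two_mul_cpow]
  rw [show 2 * (a / 2) * t = a * t by ring]
  field_simp

theorem integral_cexp_mul_I_mul_sech_pow (a : ℝ) (n : ℕ) :
    ∫ t : ℝ, cexp ((a * t : ℝ) * I) * (((1 / Real.cosh t) ^ (2 * n) : ℝ) : ℂ) =
      4 ^ n / 2 * betaIntegral (n + (a / 2 : ℝ) * I) (n - (a / 2 : ℝ) * I) := by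
  have h := Measure.integral_comp_mul_left
    (fun v : ℝ => (sigmoid v : ℂ) ^ ((n : ℂ) + (a / 2 : ℝ) * I) *
      (sigmoid (-v) : ℂ) ^ ((n : ℂ) - (a / 2 : ℝ) * I)) 2
  simp only [sigmoid_two_mul_cpow_mul_sigmoid_neg_two_mul_cpow,
    integral_sigmoid_cpow_mul_sigmoid_neg_cpow] at h
  have hscale : ∀ t : ℝ, 2 * (a / 2) * t = a * t := fun t => by ring
  rw [integral_div, div_eq_iff (pow_ne_zero _ (by norm_num))] at h
  simp only [hscale] at h
  rw [h, abs_of_pos (by norm_num), real_smul]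
  push_cast
  ring

lemma Gamma_add_one_add_mul_Gamma_add_one_sub {s b : ℂ} (h₁ : s + b ≠ 0) (h₂ : s - b ≠ 0) :
    Gamma (s + 1 + b) * Gamma (s + 1 - b) = (s ^ 2 - b ^ 2) * (Gamma (s + b) * Gamma (s - b)) := by
  rw [add_right_comm, Gamma_add_one _ h₁, add_sub_right_comm, Gamma_add_one _ h₂]
  ring

lemma Gamma_one_add_mul_I_mul_Gamma_one_sub_mul_I_s19 {β : ℝ} (hβ : β ≠ 0) :
    Gamma (1 + β * I) * Gamma (1 - β * I) = ((π * β / Real.sinh (π * β) : ℝ) : ℂ) := by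
  have hβI : (β : ℂ) * I ≠ 0 := mul_ne_zero (ofReal_ne_zero.2 hβ) I_ne_zero
  have hs : Real.sinh (π * β) ≠ 0 := Real.sinh_ne_zero.2 (mul_ne_zero pi_ne_zero hβ)
  rw [add_comm, Gamma_add_one _ hβI, mul_assoc, Complex.Gamma_mul_Gamma_one_sub, ← mul_assoc,
    ← ofReal_mul, sin_mul_I, ← ofReal_sinh]
  push_cast
  field_simp

theorem integrable_cexp_mul_I_mul_tanh_sq_mul_sech_pow_four (a : ℝ) :
    Integrable fun t : ℝ =>
      cexp ((a * t : ℝ) * I) * ((Real.tanh t ^ 2 * (1 / Real.cosh t) ^ 4 : ℝ) : ℂ) := by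
  simp_rw [tanh_sq_mul_one_div_cosh_pow_four, ofReal_sub, mul_sub]
  exact (integrable_cexp_mul_I_mul_sech_pow a two_ne_zero).sub
    (integrable_cexp_mul_I_mul_sech_pow a three_ne_zero)

theorem integral_cexp_mul_I_mul_tanh_sq_mul_sech_pow_four (a : ℝ) :
    ∫ t : ℝ, cexp ((a * t : ℝ) * I) * ((Real.tanh t ^ 2 * (1 / Real.cosh t) ^ 4 : ℝ) : ℂ) =
      ((4 + a ^ 2) * (4 - a ^ 2) / 60 : ℝ) *
        (Gamma (1 + (a / 2 : ℝ) * I) * Gamma (1 - (a / 2 : ℝ) * I)) := by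
  simp_rw [tanh_sq_mul_one_div_cosh_pow_four, ofReal_sub, mul_sub]
  set b : ℂ := (a / 2 : ℝ) * I with hb
  have hne : ∀ k : ℝ, k ≠ 0 → k + b ≠ 0 ∧ k - b ≠ 0 := fun k hk =>
    ⟨fun h => hk (by simpa [hb] using congrArg re h),
      fun h => hk (by simpa [hb] using congrArg re h)⟩
  have hre : ∀ k : ℕ, k ≠ 0 → 0 < ((k : ℂ) + b).re ∧ 0 < ((k : ℂ) - b).re := fun k hk => by
    simp [hb, Nat.pos_of_ne_zero hk]
  rw [integral_sub (integrable_cexp_mul_I_mul_sech_pow a two_ne_zero)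
      (integrable_cexp_mul_I_mul_sech_pow a three_ne_zero),
    integral_cexp_mul_I_mul_sech_pow, integral_cexp_mul_I_mul_sech_pow,
    betaIntegral_eq_Gamma_mul_div _ _ (hre 2 two_ne_zero).1 (hre 2 two_ne_zero).2,
    betaIntegral_eq_Gamma_mul_div _ _ (hre 3 three_ne_zero).1 (hre 3 three_ne_zero).2]
  have hΓ₂ := Gamma_add_one_add_mul_Gamma_add_one_sub (hne 1 one_ne_zero).1 (hne 1 one_ne_zero).2
  have hΓ₃ := Gamma_add_one_add_mul_Gamma_add_one_sub (hne 2 two_ne_zero).1 (hne 2 two_ne_zero).2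
  have hb2 : b ^ 2 = -((a / 2 : ℝ) : ℂ) ^ 2 := by rw [hb, mul_pow, I_sq]; ring
  -- `norm_num` also evaluates `Γ 4 = 3!` and `Γ 6 = 5!`.
  norm_num at hΓ₂ hΓ₃ ⊢
  rw [hΓ₃, hΓ₂, hb2]
  push_cast
  ring

end Complex

open Complex

/-- For every a ∈ ℝ, the function `v ↦ cos(a·v)·tanh(v)²·sech(v)⁴`
is integrable on ℝ and
`∫ cos(a·v)·tanh(v)²·sech(v)⁴ dv = π·a·(a² + 4)·(4 − a²)/(120·sinh(π·a/2))`,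
where for a = 0 the right-hand side is interpreted as its limit 4/15. -/
theorem fourier_integral_cos_tanh_sq_sech_fourth (a : ℝ) :
    Integrable (fun v : ℝ => Real.cos (a * v) * (Real.tanh v) ^ 2 * (1 / Real.cosh v) ^ 4) ∧
    (a ≠ 0 → ∫ v : ℝ, Real.cos (a * v) * (Real.tanh v) ^ 2 * (1 / Real.cosh v) ^ 4 =
      Real.pi * a * (a ^ 2 + 4) * (4 - a ^ 2) / (120 * Real.sinh (Real.pi * a / 2))) ∧
    (a = 0 → ∫ v : ℝ, Real.cos (a * v) * (Real.tanh v) ^ 2 * (1 / Real.cosh v) ^ 4 =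
      4 / 15) := by
  have hint := integrable_cexp_mul_I_mul_tanh_sq_mul_sech_pow_four a
  have hre : ∀ v : ℝ, (cexp ((a * v : ℝ) * I) *
      ((Real.tanh v ^ 2 * (1 / Real.cosh v) ^ 4 : ℝ) : ℂ)).re =
      Real.cos (a * v) * Real.tanh v ^ 2 * (1 / Real.cosh v) ^ 4 := fun v => by
    rw [re_mul_ofReal, exp_ofReal_mul_I_re, mul_assoc]
  have hval : ∫ v : ℝ, Real.cos (a * v) * Real.tanh v ^ 2 * (1 / Real.cosh v) ^ 4 =
      (4 + a ^ 2) * (4 - a ^ 2) / 60 *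
        (Gamma (1 + (a / 2 : ℝ) * I) * Gamma (1 - (a / 2 : ℝ) * I)).re := by
    simp_rw [← hre]
    rw [← RCLike.re_eq_complex_re, integral_re hint, RCLike.re_eq_complex_re,
      integral_cexp_mul_I_mul_tanh_sq_mul_sech_pow_four, re_ofReal_mul]
  refine ⟨hint.re.congr (Filter.Eventually.of_forall hre), fun ha => ?_, fun ha => ?_⟩
  · have hs : Real.sinh (Real.pi * a / 2) ≠ 0 := Real.sinh_ne_zero.2 (by positivity)
    rw [hval, Gamma_one_add_mul_I_mul_Gamma_one_sub_mul_I_s19 (div_ne_zero ha two_ne_zero), ofReal_re,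
      ← mul_div_assoc Real.pi]
    field_simp
    ring
  · subst ha
    rw [hval]
    norm_num
end
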